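/- Let A be an associative unital algebra over ℂ with a full comultiplication Δ, and assume there exist a faithful left integral φ and a faithful right integral on A. If elements a₁, …, aₙ, b₁, …, bₙ ∈ A satisfy Σᵢ (id ⊗ φ)(Δ(aᵢ)(1 ⊗ bᵢ)) = 0, then Σᵢ φ(aᵢbᵢ) = 0. -/

import Mathlib

open TensorProduct

noncomputable section

variable {A : Type*} [Ring A] [Algebra ℂ A]

/-- The slice map `id ⊗ ω : A ⊗ A → A`. -/
def sliceR (ω : A →ₗ[ℂ] ℂ) : A ⊗[ℂ] A →ₗ[ℂ] A :=
  (TensorProduct.rid ℂ A).toLinearMap ∘ₗ TensorProduct.map LinearMap.id ω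

/-- The slice map `ω ⊗ id : A ⊗ A → A`. -/
def sliceL (ω : A →ₗ[ℂ] ℂ) : A ⊗[ℂ] A →ₗ[ℂ] A :=
  (TensorProduct.lid ℂ A).toLinearMap ∘ₗ TensorProduct.map ω LinearMap.id

/-- Coassociativity of a comultiplication `Δ : A → A ⊗ A`:
`(Δ ⊗ id) ∘ Δ = (id ⊗ Δ) ∘ Δ` (up to the associator). -/
def IsCoassoc (Δ : A →ₐ[ℂ] A ⊗[ℂ] A) : Prop :=
  ∀ a : A,
    TensorProduct.assoc ℂ A A A (TensorProduct.map Δ.toLinearMap LinearMap.id (Δ a)) =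
      TensorProduct.map LinearMap.id Δ.toLinearMap (Δ a)

/-- A left integral: a nonzero functional with `(id ⊗ φ)(Δ a) = φ(a)·1` for all `a`. -/
def IsLeftIntegral (Δ : A →ₐ[ℂ] A ⊗[ℂ] A) (φ : A →ₗ[ℂ] ℂ) : Prop :=
  φ ≠ 0 ∧ ∀ a : A, sliceR φ (Δ a) = φ a • (1 : A)

/-- A right integral: a nonzero functional with `(ψ ⊗ id)(Δ a) = ψ(a)·1` for all `a`. -/
def IsRightIntegral (Δ : A →ₐ[ℂ] A ⊗[ℂ] A) (ψ : A →ₗ[ℂ] ℂ) : Prop :=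
  ψ ≠ 0 ∧ ∀ a : A, sliceL ψ (Δ a) = ψ a • (1 : A)

/-- A faithful functional: the bilinear form `(a, b) ↦ ω(ab)` is non-degenerate. -/
def IsFaithful (ω : A →ₗ[ℂ] ℂ) : Prop :=
  (∀ b : A, (∀ a : A, ω (a * b) = 0) → b = 0) ∧
  (∀ b : A, (∀ a : A, ω (b * a) = 0) → b = 0)

/-- The left leg of an element `x ∈ A ⊗ A`: the span of `{(id ⊗ ω)(x) : ω ∈ A*}`. -/
def leftLegOf (x : A ⊗[ℂ] A) : Submodule ℂ A :=
  Submodule.span ℂ {y : A | ∃ ω : A →ₗ[ℂ] ℂ, y = sliceR ω x}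

/-- The right leg of an element `x ∈ A ⊗ A`: the span of `{(ω ⊗ id)(x) : ω ∈ A*}`. -/
def rightLegOf (x : A ⊗[ℂ] A) : Submodule ℂ A :=
  Submodule.span ℂ {y : A | ∃ ω : A →ₗ[ℂ] ℂ, y = sliceL ω x}

/-- The left leg of `Δ`: the span of `{(id ⊗ ω)(Δ a) : a ∈ A, ω ∈ A*}`. -/
def leftLeg (Δ : A →ₐ[ℂ] A ⊗[ℂ] A) : Submodule ℂ A :=
  Submodule.span ℂ {y : A | ∃ (a : A) (ω : A →ₗ[ℂ] ℂ), y = sliceR ω (Δ a)}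

/-- The right leg of `Δ`: the span of `{(ω ⊗ id)(Δ a) : a ∈ A, ω ∈ A*}`. -/
def rightLeg (Δ : A →ₐ[ℂ] A ⊗[ℂ] A) : Submodule ℂ A :=
  Submodule.span ℂ {y : A | ∃ (a : A) (ω : A →ₗ[ℂ] ℂ), y = sliceL ω (Δ a)}

/-- A comultiplication is full if both of its legs are all of `A`. -/
def IsFull (Δ : A →ₐ[ℂ] A ⊗[ℂ] A) : Prop :=
  leftLeg Δ = ⊤ ∧ rightLeg Δ = ⊤

/-- The linear map `T₁` with `T₁ (a ⊗ b) = Δ(a) * (1 ⊗ b)`. -/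
def T1 (Δ : A →ₐ[ℂ] A ⊗[ℂ] A) : A ⊗[ℂ] A →ₗ[ℂ] A ⊗[ℂ] A :=
  LinearMap.mul' ℂ (A ⊗[ℂ] A) ∘ₗ
    TensorProduct.map Δ.toLinearMap (TensorProduct.mk ℂ A A 1)

/-- The linear map `T₁'` with `T₁' (a ⊗ b) = Δ(a) * (b ⊗ 1)`. -/
def T1' (Δ : A →ₐ[ℂ] A ⊗[ℂ] A) : A ⊗[ℂ] A →ₗ[ℂ] A ⊗[ℂ] A :=
  LinearMap.mul' ℂ (A ⊗[ℂ] A) ∘ₗ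
    TensorProduct.map Δ.toLinearMap ((TensorProduct.mk ℂ A A).flip 1)

/-- The linear map `T₂` with `T₂ (a ⊗ b) = (a ⊗ 1) * Δ(b)`. -/
def T2 (Δ : A →ₐ[ℂ] A ⊗[ℂ] A) : A ⊗[ℂ] A →ₗ[ℂ] A ⊗[ℂ] A :=
  LinearMap.mul' ℂ (A ⊗[ℂ] A) ∘ₗ
    TensorProduct.map ((TensorProduct.mk ℂ A A).flip 1) Δ.toLinearMap

/-- The linear map `T₂'` with `T₂' (a ⊗ b) = (1 ⊗ a) * Δ(b)`. -/
def T2' (Δ : A →ₐ[ℂ] A ⊗[ℂ] A) : A ⊗[ℂ] A →ₗ[ℂ] A ⊗[ℂ] A :=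
  LinearMap.mul' ℂ (A ⊗[ℂ] A) ∘ₗ
    TensorProduct.map (TensorProduct.mk ℂ A A 1) Δ.toLinearMap

/-- A left cointegral: a nonzero element `h` with `Δ(a)(1 ⊗ h) = a ⊗ h` for all `a`. -/
def IsLeftCointegral (Δ : A →ₐ[ℂ] A ⊗[ℂ] A) (h : A) : Prop :=
  h ≠ 0 ∧ ∀ a : A, Δ a * ((1 : A) ⊗ₜ[ℂ] h) = a ⊗ₜ[ℂ] h

/-- A right cointegral: a nonzero element `k` with `(k ⊗ 1)Δ(a) = k ⊗ a` for all `a`. -/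
def IsRightCointegral (Δ : A →ₐ[ℂ] A ⊗[ℂ] A) (k : A) : Prop :=
  k ≠ 0 ∧ ∀ a : A, (k ⊗ₜ[ℂ] (1 : A)) * Δ a = k ⊗ₜ[ℂ] a

/-- `Δ₁₃(a) = (1 ⊗ σ)(Δ(a) ⊗ 1)`, viewed in `A ⊗ (A ⊗ A)`. -/
def delta13 (Δ : A →ₐ[ℂ] A ⊗[ℂ] A) (a : A) : A ⊗[ℂ] (A ⊗[ℂ] A) :=
  TensorProduct.map LinearMap.id (TensorProduct.comm ℂ A A).toLinearMap
    (TensorProduct.assoc ℂ A A A (Δ a ⊗ₜ[ℂ] (1 : A)))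

/-!
Put `V = Σᵢ bᵢ₍₁₎ ⊗ (id ⊗ φ)(Δ(aᵢ)(1 ⊗ bᵢ₍₂₎))` (`mixedSlice`). Left invariance of `φ` and
multiplicativity of `Δ` give `m(σ V) = Σᵢ φ(aᵢbᵢ) · 1`, so it suffices to show `V = 0`. As `ψ` is
faithful, this follows once `ψ(c · (ψ(e ·) ⊗ id) V) = 0` for all `c, e`; that number is
`Σᵢ φ(ρ_c(aᵢ) ρ_e(bᵢ))` with `ρ_c(x) = (ψ ⊗ id)((c ⊗ 1)Δx)`. Coassociativity and right invariance
of `ψ` rewrite `1 ⊗ ρ_c(a)` as `Σ (λ_c(a₍₁₎) ⊗ 1)Δ(a₍₂₎)`, where `λ_c(u) = (ψ ⊗ id)(Δ(c)(u ⊗ 1))`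
(`sliceLComulMul`), and then left invariance of `φ` turns the number into
`ψ(e · λ_c(Σᵢ (id ⊗ φ)(Δ(aᵢ)(1 ⊗ bᵢ))))`, which vanishes by hypothesis.
-/

@[simp]
lemma sliceR_tmul (ω : A →ₗ[ℂ] ℂ) (x y : A) : sliceR ω (x ⊗ₜ[ℂ] y) = ω y • x := by
  simp [sliceR]

@[simp]
lemma sliceL_tmul (ω : A →ₗ[ℂ] ℂ) (x y : A) : sliceL ω (x ⊗ₜ[ℂ] y) = ω x • y := by
  simp [sliceL]

lemma apply_sliceR (f g : A →ₗ[ℂ] ℂ) (x : A ⊗[ℂ] A) : f (sliceR g x) = g (sliceL f x) := by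
  induction x using TensorProduct.induction_on with
  | zero => simp
  | tmul u v => simp [mul_comm]
  | add s t hs ht => simp [hs, ht]

lemma sliceR_tmul_one_mul (ω : A →ₗ[ℂ] ℂ) (w : A) (t : A ⊗[ℂ] A) :
    sliceR ω ((w ⊗ₜ[ℂ] (1 : A)) * t) = w * sliceR ω t := by
  induction t using TensorProduct.induction_on with
  | zero => simp
  | tmul p q => simp
  | add s t hs ht => simp [mul_add, hs, ht]

lemma sliceR_mul_tmul_one (ω : A →ₗ[ℂ] ℂ) (t : A ⊗[ℂ] A) (p : A) :
    sliceR ω (t * (p ⊗ₜ[ℂ] (1 : A))) = sliceR ω t * p := by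
  induction t using TensorProduct.induction_on with
  | zero => simp
  | tmul x y => simp
  | add s t hs ht => simp [add_mul, hs, ht]

lemma sliceL_tmul_one_mul (ω : A →ₗ[ℂ] ℂ) (c : A) (t : A ⊗[ℂ] A) :
    sliceL ω ((c ⊗ₜ[ℂ] (1 : A)) * t) = sliceL (ω ∘ₗ LinearMap.mulLeft ℂ c) t := by
  induction t using TensorProduct.induction_on with
  | zero => simp
  | tmul p q => simp
  | add s t hs ht => simp [mul_add, hs, ht]

lemma sliceL_one_tmul_mul (ω : A →ₗ[ℂ] ℂ) (w : A) (t : A ⊗[ℂ] A) :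
    sliceL ω (((1 : A) ⊗ₜ[ℂ] w) * t) = w * sliceL ω t := by
  induction t using TensorProduct.induction_on with
  | zero => simp
  | tmul p q => simp
  | add s t hs ht => simp [mul_add, hs, ht]

lemma sliceL_mul_one_tmul (ω : A →ₗ[ℂ] ℂ) (t : A ⊗[ℂ] A) (v : A) :
    sliceL ω (t * ((1 : A) ⊗ₜ[ℂ] v)) = sliceL ω t * v := by
  induction t using TensorProduct.induction_on with
  | zero => simp
  | tmul p q => simp
  | add s t hs ht => simp [add_mul, hs, ht]

lemma sliceR_rTensor (ω : A →ₗ[ℂ] ℂ) (f : A →ₗ[ℂ] A) (t : A ⊗[ℂ] A) :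
    sliceR ω (f.rTensor A t) = f (sliceR ω t) := by
  induction t using TensorProduct.induction_on with
  | zero => simp
  | tmul p q => simp
  | add s t hs ht => simp [hs, ht]

lemma eq_zero_of_forall_sliceR_eq_zero {x : A ⊗[ℂ] A} (h : ∀ ω, sliceR ω x = 0) : x = 0 := by
  classical
  let B := Module.Basis.ofVectorSpace ℂ A
  have coord_eq : ∀ k, Finsupp.lapply k ∘ₗ (equivFinsuppOfBasisRight B).toLinearMap =
      sliceR (B.coord k) := fun k => by
    ext u v
    simp
  refine (equivFinsuppOfBasisRight B).map_eq_zero_iff.mp (Finsupp.ext fun k => ?_)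
  simpa using (LinearMap.congr_fun (coord_eq k) x).trans (h _)

lemma eq_zero_of_forall_sliceL_mulLeft_eq_zero {ψ : A →ₗ[ℂ] ℂ}
    (hψ : ∀ b : A, (∀ a : A, ψ (a * b) = 0) → b = 0) {x : A ⊗[ℂ] A}
    (h : ∀ e, sliceL (ψ ∘ₗ LinearMap.mulLeft ℂ e) x = 0) : x = 0 :=
  eq_zero_of_forall_sliceR_eq_zero fun ω => hψ _ fun e => by
    simpa [h e] using apply_sliceR (ψ ∘ₗ LinearMap.mulLeft ℂ e) ω x

section Integrals

variable {Δ : A →ₐ[ℂ] A ⊗[ℂ] A} {φ ψ : A →ₗ[ℂ] ℂ}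

lemma T1_tmul (a b : A) : T1 Δ (a ⊗ₜ[ℂ] b) = Δ a * ((1 : A) ⊗ₜ[ℂ] b) := rfl

lemma T2_tmul (a b : A) : T2 Δ (a ⊗ₜ[ℂ] b) = (a ⊗ₜ[ℂ] (1 : A)) * Δ b := rfl

lemma T2_rTensor_mul_one_tmul (f : A →ₗ[ℂ] A) (t : A ⊗[ℂ] A) (b : A) :
    T2 Δ (f.rTensor A (t * ((1 : A) ⊗ₜ[ℂ] b))) = T2 Δ (f.rTensor A t) * Δ b := by
  induction t using TensorProduct.induction_on with
  | zero => simp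
  | tmul x y => simp [T2_tmul, mul_assoc]
  | add s t hs ht => simp [add_mul, hs, ht]

lemma sliceR_T2 (hφ : IsLeftIntegral Δ φ) (t : A ⊗[ℂ] A) : sliceR φ (T2 Δ t) = sliceR φ t := by
  induction t using TensorProduct.induction_on with
  | zero => simp
  | tmul x y => simp [T2_tmul, sliceR_tmul_one_mul, hφ.2]
  | add s t hs ht => simp [hs, ht]

lemma rTensor_sliceL_rTensor_comul (hψ : IsRightIntegral Δ ψ) (z : A ⊗[ℂ] A) :
    (sliceL ψ).rTensor A (Δ.toLinearMap.rTensor A z) = (1 : A) ⊗ₜ[ℂ] sliceL ψ z := by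
  induction z using TensorProduct.induction_on with
  | zero => simp
  | tmul x y => simp [hψ.2, TensorProduct.smul_tmul]
  | add s t hs ht => simp [hs, ht, TensorProduct.tmul_add]

variable (Δ ψ) in
def sliceLComulMul (c : A) : A →ₗ[ℂ] A :=
  sliceL ψ ∘ₗ LinearMap.mulLeft ℂ (Δ c) ∘ₗ (TensorProduct.mk ℂ A A).flip 1

lemma sliceLComulMul_apply (c u : A) :
    sliceLComulMul Δ ψ c u = sliceL ψ (Δ c * (u ⊗ₜ[ℂ] (1 : A))) := rfl

lemma sliceLComulMul_tmul_one_mul (c x : A) (s : A ⊗[ℂ] A) :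
    (sliceLComulMul Δ ψ c x ⊗ₜ[ℂ] (1 : A)) * s =
      (sliceL ψ).rTensor A
        ((Δ c ⊗ₜ[ℂ] (1 : A)) * (TensorProduct.assoc ℂ A A A).symm (x ⊗ₜ s)) := by
  induction s using TensorProduct.induction_on with
  | zero => simp
  | tmul p q =>
    have : Δ c * (x ⊗ₜ[ℂ] p) = Δ c * (x ⊗ₜ[ℂ] (1 : A)) * ((1 : A) ⊗ₜ[ℂ] p) := by
      simp [mul_assoc]
    simp [sliceLComulMul_apply, this, sliceL_mul_one_tmul]
  | add s t hs ht => simp [mul_add, TensorProduct.tmul_add, hs, ht]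

lemma T2_rTensor_sliceLComulMul (c : A) (t : A ⊗[ℂ] A) :
    T2 Δ ((sliceLComulMul Δ ψ c).rTensor A t) =
      (sliceL ψ).rTensor A ((Δ c ⊗ₜ[ℂ] (1 : A)) *
        (TensorProduct.assoc ℂ A A A).symm (Δ.toLinearMap.lTensor A t)) := by
  induction t using TensorProduct.induction_on with
  | zero => simp
  | tmul x y => simp [T2_tmul, sliceLComulMul_tmul_one_mul]
  | add s t hs ht => simp [mul_add, hs, ht]

lemma T2_rTensor_sliceLComulMul_comul (hΔ : IsCoassoc Δ) (hψ : IsRightIntegral Δ ψ) (c a : A) :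
    T2 Δ ((sliceLComulMul Δ ψ c).rTensor A (Δ a)) =
      (1 : A) ⊗ₜ[ℂ] sliceL (ψ ∘ₗ LinearMap.mulLeft ℂ c) (Δ a) := by
  have coassoc : (TensorProduct.assoc ℂ A A A).symm (Δ.toLinearMap.lTensor A (Δ a)) =
      Δ.toLinearMap.rTensor A (Δ a) :=
    (LinearEquiv.symm_apply_eq _).mpr (hΔ a).symm
  have mul_comul : (Δ c ⊗ₜ[ℂ] (1 : A)) * Δ.toLinearMap.rTensor A (Δ a) =
      Δ.toLinearMap.rTensor A ((c ⊗ₜ[ℂ] (1 : A)) * Δ a) :=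
    (map_mul (Algebra.TensorProduct.rTensor A Δ) (c ⊗ₜ[ℂ] (1 : A)) (Δ a)).symm
  rw [T2_rTensor_sliceLComulMul, coassoc, mul_comul, rTensor_sliceL_rTensor_comul hψ,
    sliceL_tmul_one_mul]

variable (Δ φ) in
def mixedSlice : A ⊗[ℂ] A →ₗ[ℂ] A ⊗[ℂ] A :=
  (sliceR φ ∘ₗ T1 Δ).lTensor A ∘ₗ (TensorProduct.leftComm ℂ A A A).toLinearMap ∘ₗ
    Δ.toLinearMap.lTensor A

lemma sliceL_lTensor_leftComm (ω : A →ₗ[ℂ] ℂ) (F : A ⊗[ℂ] A →ₗ[ℂ] A) (a : A) (t : A ⊗[ℂ] A) :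
    sliceL ω (F.lTensor A (TensorProduct.leftComm ℂ A A A (a ⊗ₜ t))) = F (a ⊗ₜ sliceL ω t) := by
  induction t using TensorProduct.induction_on with
  | zero => simp
  | tmul p q => simp [TensorProduct.tmul_smul]
  | add s t hs ht => simp [TensorProduct.tmul_add, hs, ht]

lemma mul'_comm_lTensor_leftComm (a : A) (t : A ⊗[ℂ] A) :
    LinearMap.mul' ℂ A (TensorProduct.comm ℂ A A
      ((sliceR φ ∘ₗ T1 Δ).lTensor A (TensorProduct.leftComm ℂ A A A (a ⊗ₜ t)))) =
      sliceR φ (Δ a * t) := by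
  induction t using TensorProduct.induction_on with
  | zero => simp
  | tmul p q =>
    have : Δ a * (p ⊗ₜ[ℂ] q) = Δ a * ((1 : A) ⊗ₜ[ℂ] q) * (p ⊗ₜ[ℂ] (1 : A)) := by
      simp [mul_assoc]
    simp [T1_tmul, this, sliceR_mul_tmul_one]
  | add s t hs ht => simp [TensorProduct.tmul_add, mul_add, hs, ht]

lemma mul'_comm_mixedSlice (hφ : IsLeftIntegral Δ φ) (x : A ⊗[ℂ] A) :
    LinearMap.mul' ℂ A (TensorProduct.comm ℂ A A (mixedSlice Δ φ x)) =
      φ (LinearMap.mul' ℂ A x) • (1 : A) := by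
  induction x using TensorProduct.induction_on with
  | zero => simp
  | tmul a b => simp [mixedSlice, mul'_comm_lTensor_leftComm, ← map_mul, hφ.2]
  | add s t hs ht => simp [add_smul, hs, ht]

lemma apply_mul_sliceL_mixedSlice (hΔ : IsCoassoc Δ) (hφ : IsLeftIntegral Δ φ)
    (hψ : IsRightIntegral Δ ψ) (c e : A) (x : A ⊗[ℂ] A) :
    ψ (c * sliceL (ψ ∘ₗ LinearMap.mulLeft ℂ e) (mixedSlice Δ φ x)) =
      ψ (e * sliceLComulMul Δ ψ c (sliceR φ (T1 Δ x))) := by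
  induction x using TensorProduct.induction_on with
  | zero => simp
  | add s t hs ht => simp only [map_add, mul_add, hs, ht]
  | tmul a b =>
    set ρ := fun (f : A) (y : A) => sliceL (ψ ∘ₗ LinearMap.mulLeft ℂ f) (Δ y)
    calc ψ (c * sliceL (ψ ∘ₗ LinearMap.mulLeft ℂ e) (mixedSlice Δ φ (a ⊗ₜ b)))
        = (ψ ∘ₗ LinearMap.mulLeft ℂ c) (sliceR φ (Δ a * ((1 : A) ⊗ₜ[ℂ] ρ e b))) := by
          simp [mixedSlice, sliceL_lTensor_leftComm, T1_tmul, ρ]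
      _ = φ (ρ c a * ρ e b) := by rw [apply_sliceR, sliceL_mul_one_tmul]
      _ = (ψ ∘ₗ LinearMap.mulLeft ℂ e) (sliceR φ (((1 : A) ⊗ₜ[ℂ] ρ c a) * Δ b)) := by
          rw [apply_sliceR, sliceL_one_tmul_mul]
      _ = ψ (e * sliceLComulMul Δ ψ c (sliceR φ (T1 Δ (a ⊗ₜ b)))) := by
          rw [← T2_rTensor_sliceLComulMul_comul hΔ hψ, ← T2_rTensor_mul_one_tmul, sliceR_T2 hφ,
            sliceR_rTensor, T1_tmul]
          rfl

theorem apply_mul'_eq_zero_of_sliceR_T1_eq_zero (hΔ : IsCoassoc Δ) (hφ : IsLeftIntegral Δ φ)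
    (hψ : IsRightIntegral Δ ψ) (hψf : ∀ b : A, (∀ a : A, ψ (a * b) = 0) → b = 0)
    {x : A ⊗[ℂ] A} (hx : sliceR φ (T1 Δ x) = 0) : φ (LinearMap.mul' ℂ A x) = 0 := by
  have hV : mixedSlice Δ φ x = 0 :=
    eq_zero_of_forall_sliceL_mulLeft_eq_zero hψf fun e => hψf _ fun c => by
      rw [apply_mul_sliceL_mixedSlice hΔ hφ hψ, hx, map_zero, mul_zero, map_zero]
  obtain ⟨y, hy⟩ : ∃ y, φ y ≠ 0 := not_forall.mp fun h => hφ.1 (LinearMap.ext h)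
  have : Nontrivial A := nontrivial_of_ne y 0 fun h => hy (by rw [h, map_zero])
  have h := mul'_comm_mixedSlice hφ x
  rw [hV, map_zero, map_zero, eq_comm, smul_eq_zero] at h
  exact h.resolve_right one_ne_zero

end Integrals

theorem sum_phi_eq_zero_of_sum_slice_eq_zero_general
    (Δ : A →ₐ[ℂ] A ⊗[ℂ] A) (hΔ : IsCoassoc Δ)
    (φ : A →ₗ[ℂ] ℂ) (hφ : IsLeftIntegral Δ φ)
    (ψ : A →ₗ[ℂ] ℂ) (hψ : IsRightIntegral Δ ψ) (hψf : IsFaithful ψ)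
    (n : ℕ) (a b : Fin n → A)
    (h0 : ∑ i, sliceR φ (Δ (a i) * ((1 : A) ⊗ₜ[ℂ] b i)) = 0) :
    ∑ i, φ (a i * b i) = 0 := by
  have hx : sliceR φ (T1 Δ (∑ i, a i ⊗ₜ[ℂ] b i)) = 0 := by simpa [T1_tmul] using h0
  simpa using apply_mul'_eq_zero_of_sliceR_T1_eq_zero hΔ hφ hψ hψf.1 hx

/-- If `Σᵢ (id ⊗ φ)(Δ(aᵢ)(1 ⊗ bᵢ)) = 0`, then `Σᵢ φ(aᵢbᵢ) = 0`. -/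
theorem sum_phi_eq_zero_of_sum_slice_eq_zero
    (Δ : A →ₐ[ℂ] A ⊗[ℂ] A) (hΔ : IsCoassoc Δ) (hfull : IsFull Δ)
    (φ : A →ₗ[ℂ] ℂ) (hφ : IsLeftIntegral Δ φ) (hφf : IsFaithful φ)
    (ψ : A →ₗ[ℂ] ℂ) (hψ : IsRightIntegral Δ ψ) (hψf : IsFaithful ψ)
    (n : ℕ) (a b : Fin n → A)
    (h0 : ∑ i, sliceR φ (Δ (a i) * ((1 : A) ⊗ₜ[ℂ] b i)) = 0) :
    ∑ i, φ (a i * b i) = 0 :=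
  sum_phi_eq_zero_of_sum_slice_eq_zero_general Δ hΔ φ hφ ψ hψ hψf n a b h0
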